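/- arXiv:1705.03674 — 4 statements merged into one kernel-verified Lean document; each statement's English description precedes it below -/
import Mathlib

section
/- Let λ, μ be real numbers with λμ = κ for a constant κ > 1, λ < 0, μ < 0, and set t = arctanh(1/√κ) (well-defined since κ > 1). Then (λ - tanh t)/(1 - λ tanh t) + (μ - tanh t)/(1 - μ tanh t) = -(κ + 1)/√κ. In particular, the sum depends only on κ. -/
/-- The inverse hyperbolic tangent, `arctanh x = (1/2) log((1+x)/(1-x))`. -/
noncomputable def arctanh (x : ℝ) : ℝ := (1 / 2) * Real.log ((1 + x) / (1 - x))

theorem arctanh_eq_artanh {x : ℝ} (hx : x ∈ Set.Icc (-1) 1) : arctanh x = Real.artanh x :=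
  (Real.artanh_eq_half_log hx).symm

theorem tanh_arctanh {x : ℝ} (hx : x ∈ Set.Ioo (-1) 1) : Real.tanh (arctanh x) = x := by
  rw [arctanh_eq_artanh (Set.Ioo_subset_Icc_self hx), Real.tanh_artanh hx]

/- Over the common denominator `(s - l)(s - m) = -s (l + m - 2s)` (using `lm = s²`),
the numerator of the sum is `(s² + 1)(l + m - 2s)`. -/
theorem sub_div_one_sub_mul_add_of_mul_eq_sq {l m s : ℝ} (hs : s ≠ 0) (hl : l ≠ s) (hm : m ≠ s)
    (hlm : l * m = s ^ 2) :
    (l - 1 / s) / (1 - l * (1 / s)) + (m - 1 / s) / (1 - m * (1 / s)) = -((s ^ 2 + 1) / s) := by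
  have hl' : s - l ≠ 0 := sub_ne_zero.mpr hl.symm
  have hm' : s - m ≠ 0 := sub_ne_zero.mpr hm.symm
  field_simp
  linear_combination (1 - s ^ 2) * hlm

/-- For `λ, μ < 0` with `λμ = κ > 1` and `t = arctanh (1/√κ)`, the sum
`(λ - tanh t)/(1 - λ tanh t) + (μ - tanh t)/(1 - μ tanh t)` equals `-(κ + 1)/√κ`;
in particular it depends only on `κ`. -/
theorem stmt2 (lam mu κ : ℝ) (hlam : lam < 0) (hmu : mu < 0) (hκ : 1 < κ)
    (hprod : lam * mu = κ) :
    (lam - Real.tanh (arctanh (1 / Real.sqrt κ))) /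
        (1 - lam * Real.tanh (arctanh (1 / Real.sqrt κ))) +
      (mu - Real.tanh (arctanh (1 / Real.sqrt κ))) /
        (1 - mu * Real.tanh (arctanh (1 / Real.sqrt κ))) =
      -((κ + 1) / Real.sqrt κ) := by
  have hs : 1 < Real.sqrt κ := by rwa [Real.lt_sqrt zero_le_one, one_pow]
  have hτ : 1 / Real.sqrt κ ∈ Set.Ioo (-1) 1 :=
    ⟨by linarith [show 0 < 1 / Real.sqrt κ by positivity], (div_lt_one (by linarith)).mpr hs⟩
  have hsq : Real.sqrt κ ^ 2 = κ := Real.sq_sqrt (by linarith)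
  rw [tanh_arctanh hτ]
  have hsum := sub_div_one_sub_mul_add_of_mul_eq_sq (by positivity) (by linarith) (by linarith)
    (hprod.trans hsq.symm)
  rwa [hsq] at hsum
end

section
/- Fix real numbers t and real λ, μ with λ, μ < 0 (so that 1 - λ tanh t and 1 - μ tanh t are nonzero for t ≥ 0). Suppose λμ > 1. Then the function F(t) = ((λ - tanh t)/(1 - λ tanh t)) · ((μ - tanh t)/(1 - μ tanh t)) is strictly decreasing on (0, arctanh(1/√(λμ))). -/
open Set Real

theorem Real.tanh_strictMono : StrictMono tanh := fun x y hxy => by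
  rwa [← artanh_lt_artanh_iff ⟨neg_one_lt_tanh x, tanh_lt_one x⟩
    ⟨neg_one_lt_tanh y, tanh_lt_one y⟩, artanh_tanh, artanh_tanh]

theorem Real.tanh_nonneg {x : ℝ} (hx : 0 ≤ x) : 0 ≤ tanh x :=
  tanh_zero ▸ tanh_strictMono.monotone hx

/-- A principal curvature `a` after flowing for time `t`, written in terms of `u = tanh t`. -/
noncomputable def curvatureMap (a u : ℝ) : ℝ := (a - u) / (1 - a * u)

theorem hasDerivAt_curvatureMap {a u : ℝ} (h : 1 - a * u ≠ 0) :
    HasDerivAt (curvatureMap a) ((a ^ 2 - 1) / (1 - a * u) ^ 2) u := by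
  have hnum : HasDerivAt (fun u => a - u) (-1) u := (hasDerivAt_id u).const_sub a
  have hden : HasDerivAt (fun u => 1 - a * u) (-a) u := by
    simpa using ((hasDerivAt_id u).const_mul a).const_sub 1
  exact (hnum.div hden h).congr_deriv (by ring)

theorem one_sub_mul_pos_of_neg {a u : ℝ} (ha : a < 0) (hu : 0 ≤ u) : 0 < 1 - a * u := by
  nlinarith

theorem curvatureMap_mul_deriv_numerator_neg {a b u : ℝ} (ha : a < 0) (hb : b < 0)
    (hab : 1 < a * b) (hu : 0 ≤ u) :
    (a ^ 2 - 1) * ((b - u) * (1 - b * u)) + (a - u) * (1 - a * u) * (b ^ 2 - 1) < 0 :=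
  calc (a ^ 2 - 1) * ((b - u) * (1 - b * u)) + (a - u) * (1 - a * u) * (b ^ 2 - 1)
      = (a * b - 1) * ((1 + u ^ 2) * (a + b) - 2 * u * (a * b + 1)) := by ring
    _ < 0 := by
      have hsum : (1 + u ^ 2) * (a + b) < 0 := mul_neg_of_pos_of_neg (by positivity) (by linarith)
      have hcross : 0 ≤ 2 * u * (a * b + 1) := by nlinarith
      exact mul_neg_of_pos_of_neg (by linarith) (by linarith)

theorem strictAntiOn_curvatureMap_mul {a b : ℝ} (ha : a < 0) (hb : b < 0) (hab : 1 < a * b) :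
    StrictAntiOn (fun u => curvatureMap a u * curvatureMap b u) (Ici 0) := by
  have hderiv : ∀ u ∈ Ici (0 : ℝ), HasDerivAt (fun u => curvatureMap a u * curvatureMap b u)
      ((a ^ 2 - 1) / (1 - a * u) ^ 2 * curvatureMap b u +
        curvatureMap a u * ((b ^ 2 - 1) / (1 - b * u) ^ 2)) u := fun u hu =>
    (hasDerivAt_curvatureMap (one_sub_mul_pos_of_neg ha hu).ne').mul
      (hasDerivAt_curvatureMap (one_sub_mul_pos_of_neg hb hu).ne')
  refine strictAntiOn_of_hasDerivWithinAt_neg (convex_Ici 0)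
    (fun u hu => (hderiv u hu).continuousAt.continuousWithinAt)
    (fun u hu => (hderiv u (interior_subset hu)).hasDerivWithinAt) fun u hu => ?_
  have hu : (0 : ℝ) ≤ u := interior_subset (s := Ici (0 : ℝ)) hu
  have hA := one_sub_mul_pos_of_neg ha hu
  have hB := one_sub_mul_pos_of_neg hb hu
  have hform : (a ^ 2 - 1) / (1 - a * u) ^ 2 * curvatureMap b u +
      curvatureMap a u * ((b ^ 2 - 1) / (1 - b * u) ^ 2) =
      ((a ^ 2 - 1) * ((b - u) * (1 - b * u)) + (a - u) * (1 - a * u) * (b ^ 2 - 1)) /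
        ((1 - a * u) ^ 2 * (1 - b * u) ^ 2) := by
    unfold curvatureMap
    field_simp
  rw [hform]
  exact div_neg_of_neg_of_pos (curvatureMap_mul_deriv_numerator_neg ha hb hab hu) (by positivity)

/-- For `λ, μ < 0` with `λμ > 1`, the product of evolved principal curvatures
`F(t) = ((λ - tanh t)/(1 - λ tanh t))·((μ - tanh t)/(1 - μ tanh t))` is strictly
decreasing on `(0, arctanh(1/√(λμ)))`. -/
theorem stmt6 (lam mu : ℝ) (hlam : lam < 0) (hmu : mu < 0) (h : 1 < lam * mu) :
    StrictAntiOn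
      (fun t : ℝ =>
        ((lam - Real.tanh t) / (1 - lam * Real.tanh t)) *
          ((mu - Real.tanh t) / (1 - mu * Real.tanh t)))
      (Set.Ioo 0 (arctanh (1 / Real.sqrt (lam * mu)))) :=
  ((strictAntiOn_curvatureMap_mul hlam hmu h).comp_strictMonoOn (tanh_strictMono.strictMonoOn _)
    fun _ ht => tanh_nonneg ht).mono (Ioo_subset_Ioi_self.trans Ioi_subset_Ici_self)
end

section
/- Let B₀ be a traceless symmetric 2×2 real matrix, H a real number, J the standard rotation by π/2 (J² = -Id, J skew-symmetric), and B = B₀ + H·Id. Then (Id + BJ)(Id - JB) = (1 + λ² + H²)·Id + 2(H·Id - J)B₀, where λ² = -det(B₀) is determined by B₀² = λ²·Id. In particular the traceless part of (Id + BJ)(Id - JB) equals 2(H·Id - J)B₀. -/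
/-!
With `B = B₀ + H` and `J² = -1`, the product is `1 + (BJ - JB) + B²`. A traceless symmetric
`B₀` anticommutes with `J`, so `BJ - JB = -2JB₀`, and by Cayley–Hamilton `B₀² = -det B₀`,
so `B² = (H² - det B₀) + 2HB₀`.
-/

open Polynomial

section Anticommuting

variable {R A : Type*} [CommRing R] [Ring A] [Algebra R A]

theorem one_add_mul_mul_one_sub_mul_of_anticomm {J B₀ : A} {μ H : R} (hJ : J * J = -1)
    (hanti : J * B₀ + B₀ * J = 0) (hsq : B₀ * B₀ = μ • 1) :
    (1 + (B₀ + H • 1) * J) * (1 - J * (B₀ + H • 1)) =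
      (1 + μ + H ^ 2) • 1 + (2 : R) • ((H • 1 - J) * B₀) := by
  set B := B₀ + H • (1 : A) with hB
  have hcomm : B * J - J * B = -(2 : R) • (J * B₀) := by
    simp only [hB, add_mul, mul_add, smul_mul_assoc, mul_smul_comm, one_mul, mul_one,
      eq_neg_of_add_eq_zero_right hanti]
    module
  have hsqB : B * B = (μ + H ^ 2) • 1 + (2 * H) • B₀ := by
    simp only [hB, add_mul, mul_add, smul_mul_assoc, mul_smul_comm, one_mul, mul_one, hsq]
    module
  calc (1 + B * J) * (1 - J * B) = 1 + (B * J - J * B) - B * (J * J) * B := by noncomm_ring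
    _ = 1 + (B * J - J * B) + B * B := by rw [hJ]; noncomm_ring
    _ = (1 + μ + H ^ 2) • 1 + (2 : R) • ((H • 1 - J) * B₀) := by
      rw [hcomm, hsqB]
      simp only [sub_mul, smul_mul_assoc, one_mul]
      module

end Anticommuting

namespace Matrix

variable {R : Type*} [CommRing R]

theorem mul_self_eq_neg_det_smul_one_of_trace_eq_zero [Nontrivial R]
    {A : Matrix (Fin 2) (Fin 2) R} (htr : A.trace = 0) : A * A = (-A.det) • 1 := by
  have hCH := A.aeval_self_charpoly
  rw [charpoly_fin_two, htr] at hCH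
  simp only [map_zero, zero_mul, sub_zero, map_add, map_pow, aeval_X, aeval_C,
    Algebra.algebraMap_eq_smul_one] at hCH
  rw [← sq, neg_smul, eq_neg_iff_add_eq_zero, hCH]

theorem rotation_mul_rotation : !![(0 : R), -1; 1, 0] * !![(0 : R), -1; 1, 0] = -1 := by
  ext i j
  fin_cases i <;> fin_cases j <;> simp

theorem trace_rotation_mul_of_isSymm {A : Matrix (Fin 2) (Fin 2) R} (hsym : A.IsSymm) :
    (!![0, -1; 1, 0] * A).trace = 0 := by
  rw [eta_fin_two A, hsym.apply 0 1]
  simp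

theorem rotation_mul_add_mul_rotation_of_isSymm {A : Matrix (Fin 2) (Fin 2) R}
    (hsym : A.IsSymm) (htr : A.trace = 0) : !![0, -1; 1, 0] * A + A * !![0, -1; 1, 0] = 0 := by
  have h11 : A 1 1 = -A 0 0 := eq_neg_of_add_eq_zero_right (by rwa [trace_fin_two] at htr)
  rw [eta_fin_two A, hsym.apply 0 1, h11]
  ext i j
  fin_cases i <;> fin_cases j <;> simp

end Matrix

/-- For a traceless symmetric `B₀`, `J` the rotation by `π/2`, `B = B₀ + H·Id` and
`λ² = -det B₀` (so `B₀² = λ²·Id`), one has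
`(Id + BJ)(Id - JB) = (1 + λ² + H²)·Id + 2(H·Id - J)B₀`, and `(H·Id - J)B₀` is
traceless, so the traceless part of the left-hand side is `2(H·Id - J)B₀`. -/
theorem stmt10 (B₀ : Matrix (Fin 2) (Fin 2) ℝ) (hsym : B₀.IsSymm)
    (htr : B₀.trace = 0) (H : ℝ) :
    B₀ * B₀ = (-B₀.det) • (1 : Matrix (Fin 2) (Fin 2) ℝ) ∧
    (1 + (B₀ + H • (1 : Matrix (Fin 2) (Fin 2) ℝ)) * !![0, -1; 1, 0]) *
        (1 - !![0, -1; 1, 0] * (B₀ + H • (1 : Matrix (Fin 2) (Fin 2) ℝ))) =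
      (1 + (-B₀.det) + H ^ 2) • (1 : Matrix (Fin 2) (Fin 2) ℝ) +
        (2 : ℝ) • ((H • (1 : Matrix (Fin 2) (Fin 2) ℝ) - !![0, -1; 1, 0]) * B₀) ∧
    ((H • (1 : Matrix (Fin 2) (Fin 2) ℝ) - !![0, -1; 1, 0]) * B₀).trace = 0 := by
  have hsq := Matrix.mul_self_eq_neg_det_smul_one_of_trace_eq_zero htr
  refine ⟨hsq, one_add_mul_mul_one_sub_mul_of_anticomm Matrix.rotation_mul_rotation
    (Matrix.rotation_mul_add_mul_rotation_of_isSymm hsym htr) hsq, ?_⟩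
  rw [sub_mul, Matrix.trace_sub, smul_mul_assoc, one_mul, Matrix.trace_smul, htr,
    Matrix.trace_rotation_mul_of_isSymm hsym, smul_zero, sub_zero]
end

section
/- Let S be a compact surface with boundary carrying a metric whose Gauss curvature satisfies -K = -e^{2β} + H² for a smooth function β and constant H < 0, where Δβ = -K (Δ nonnegative at interior local maxima), and suppose e^β ≤ ε < -H on ∂S. Then e^β ≤ -H everywhere on S; consequently, writing the principal curvatures as μ = -e^β + H and μ' = e^β + H, they satisfy 2H < μ ≤ H and H ≤ μ' < 0. -/
/-!
At a global maximum `x₀` of `β` either `x₀` lies on the boundary, where `e^β ≤ ε < -H`, or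
`x₀` is an interior local maximum, where `0 ≤ Δβ = -K = H² - e^{2β}` forces `e^β ≤ -H`.
Hence `e^β ≤ -H` everywhere. Equality anywhere would, by the strong maximum principle, give
`e^β ≡ -H`, contradicting `e^β ≤ ε < -H` on the (nonempty) boundary. The bounds on the
principal curvatures `μ = H - e^β` and `μ' = H + e^β` then follow from `0 < e^β < -H`.
-/

open Real

theorem forall_le_of_le_of_isLocalMax_le {S : Type*} [TopologicalSpace S] [CompactSpace S]
    {f : S → ℝ} (hf : Continuous f) {s : Set S} {M : ℝ} (hs : ∀ x ∈ s, f x ≤ M)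
    (hmax : ∀ x ∉ s, IsLocalMax f x → f x ≤ M) (x : S) : f x ≤ M := by
  have : Nonempty S := ⟨x⟩
  obtain ⟨x₀, hx₀⟩ := hf.exists_forall_ge (by simp)
  have hfx₀ : f x₀ ≤ M := by
    by_cases h : x₀ ∈ s
    · exact hs x₀ h
    · exact hmax x₀ h (Filter.Eventually.of_forall hx₀)
  exact (hx₀ x).trans hfx₀

theorem Real.exp_le_of_exp_two_mul_le_sq {b a : ℝ} (ha : 0 ≤ a) (h : exp (2 * b) ≤ a ^ 2) :
    exp b ≤ a := by
  have hsq : exp b ^ 2 = exp (2 * b) := by rw [sq, ← Real.exp_add, two_mul]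
  exact (le_abs_self _).trans (abs_le_of_sq_le_sq (hsq ▸ h) ha)

theorem stmt15_general {S : Type*} [TopologicalSpace S] [CompactSpace S]
    (bdry : Set S) (hbdry : bdry.Nonempty)
    (β K lapβ : S → ℝ) (H ε : ℝ) (hH : H < 0)
    (hβ : Continuous β)
    (hGauss : ∀ x, -K x = -Real.exp (2 * β x) + H ^ 2)
    (hlapK : ∀ x, lapβ x = -K x)
    (hmax : ∀ x ∉ bdry, IsLocalMax β x → 0 ≤ lapβ x)
    (hbd : ∀ x ∈ bdry, Real.exp (β x) ≤ ε) (hε : ε < -H)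
    (hSMP : (∃ x, Real.exp (β x) = -H) → ∀ y, Real.exp (β y) = -H) :
    ∀ x, Real.exp (β x) ≤ -H ∧
      2 * H < -Real.exp (β x) + H ∧ -Real.exp (β x) + H ≤ H ∧
      H ≤ Real.exp (β x) + H ∧ Real.exp (β x) + H < 0 := by
  have hH' : 0 < -H := neg_pos.mpr hH
  have hle : ∀ x, exp (β x) ≤ -H := by
    intro x
    rw [← le_log_iff_exp_le hH']
    refine forall_le_of_le_of_isLocalMax_le hβ (s := bdry) (fun y hy => ?_) (fun y hy hloc => ?_) x
    · exact (le_log_iff_exp_le hH').mpr ((hbd y hy).trans hε.le)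
    · have h := hmax y hy hloc
      rw [hlapK, hGauss] at h
      refine (le_log_iff_exp_le hH').mpr (exp_le_of_exp_two_mul_le_sq hH'.le ?_)
      linarith [neg_sq H]
  have hne : ∀ x, exp (β x) ≠ -H := by
    intro x hx
    obtain ⟨b, hb⟩ := hbdry
    linarith [hSMP ⟨x, hx⟩ b, hbd b hb]
  intro x
  have hlt : exp (β x) < -H := (hle x).lt_of_ne (hne x)
  have hpos := exp_pos (β x)
  exact ⟨hle x, by linarith, by linarith, by linarith, by linarith⟩

/-- Maximum-principle bound on the principal curvatures of a CMC `H < 0` surface.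
On a compact surface `S` with boundary `bdry`, suppose the Gauss equation
`-K = -e^{2β} + H²` holds, `Δβ = -K` (with `Δ` nonnegative at interior local maxima),
and `e^β ≤ ε < -H` on the boundary, with a strong maximum principle `hSMP`.  Then
`e^β < -H` everywhere, so the principal curvatures `μ = -e^β + H`, `μ' = e^β + H`
satisfy `2H < μ ≤ H` and `H ≤ μ' < 0`. -/
theorem stmt15 {S : Type*} [TopologicalSpace S] [CompactSpace S] [Nonempty S]
    (bdry : Set S) (hbdry : bdry.Nonempty)
    (β K lapβ : S → ℝ) (H ε : ℝ) (hH : H < 0)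
    (hβ : Continuous β)
    (hGauss : ∀ x, -K x = -Real.exp (2 * β x) + H ^ 2)
    (hlapK : ∀ x, lapβ x = -K x)
    (hmax : ∀ x ∉ bdry, IsLocalMax β x → 0 ≤ lapβ x)
    (hbd : ∀ x ∈ bdry, Real.exp (β x) ≤ ε) (hε : ε < -H)
    (hSMP : (∃ x, Real.exp (β x) = -H) → ∀ y, Real.exp (β y) = -H) :
    ∀ x, Real.exp (β x) ≤ -H ∧
      2 * H < -Real.exp (β x) + H ∧ -Real.exp (β x) + H ≤ H ∧
      H ≤ Real.exp (β x) + H ∧ Real.exp (β x) + H < 0 :=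
  stmt15_general bdry hbdry β K lapβ H ε hH hβ hGauss hlapK hmax hbd hε hSMP
end
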